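/- Let d = 2r − 1 ≥ 5 be an odd integer and let f_d = (y³ − x²z)·x^{r−3}·y^{r−1} + x^d + y^d. Then the triple ρ_1 = (0, x^{r−1}y, (r+2)x^{r−3}y³ + (2r−1)y^r − (r−1)x^{r−1}z) is a Jacobian syzygy of f_d, i.e., 0·(f_d)_x + x^{r−1}y·(f_d)_y + ((r+2)x^{r−3}y³ + (2r−1)y^r − (r−1)x^{r−1}z)·(f_d)_z = 0; in particular mdr(f_d) ≤ r. -/

import Mathlib

/-!
Since `(f_d)_z = -x^(r-1) y^(r-1)` is a monomial, `ρ₁` is a syzygy as soon as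
`(f_d)_y = y^(r-2) · ρ₁,z`, which is checked by differentiating term by term. The components of
`ρ₁` are forms of degree `r` and `ρ₁ ≠ 0`, so `ρ₁` witnesses `mdr(f_d) ≤ r`.
-/

open MvPolynomial

noncomputable section

/-- The polynomial ring `S = ℂ[x,y,z]`. -/
abbrev S : Type := MvPolynomial (Fin 3) ℂ

/-- The linear map `(a,b,c) ↦ a fₓ + b f_y + c f_z`. -/
noncomputable def jacMap (f : S) : (Fin 3 → S) →ₗ[S] S :=
  Fintype.linearCombination S (fun i => pderiv i f)

/-- The module `AR(f)` of Jacobian syzygies of `f`. -/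
def AR (f : S) : Submodule S (Fin 3 → S) := LinearMap.ker (jacMap f)

/-- The Jacobian ideal `J_f = (fₓ, f_y, f_z)`. -/
def jacobianIdeal (f : S) : Ideal S := Ideal.span (Set.range fun i : Fin 3 => pderiv i f)

/-- `dim_ℂ M(f)_k`, the dimension of the degree-`k` piece of the Milnor algebra `S/J_f`,
computed as `dim (S_k / (J_f ∩ S_k))`. -/
noncomputable def milnorDim (f : S) (k : ℕ) : ℕ :=
  Module.finrank ℂ
    (↥(homogeneousSubmodule (Fin 3) ℂ k) ⧸
      (Submodule.comap (homogeneousSubmodule (Fin 3) ℂ k).subtype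
        (Submodule.restrictScalars ℂ (jacobianIdeal f))))

/-- `mdr(f)`: the minimal degree of a nonzero homogeneous Jacobian syzygy. -/
noncomputable def mdr (f : S) : ℕ :=
  sInf {k | ∃ a : Fin 3 → S, a ∈ AR f ∧ a ≠ 0 ∧ ∀ i, (a i).IsHomogeneous k}

/-- `g` is a homogeneous generating family of `AR(f)` with degrees `D`. -/
def HomGen (f : S) {m : ℕ} (g : Fin m → (Fin 3 → S)) (D : Fin m → ℕ) : Prop :=
  (∀ j, g j ∈ AR f) ∧ (∀ j i, ((g j) i).IsHomogeneous (D j)) ∧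
    Submodule.span S (Set.range g) = AR f

/-- `C : f = 0` is an `m`-syzygy curve with exponents `D`. -/
def IsMSyzygy (f : S) (m : ℕ) (D : Fin m → ℕ) : Prop :=
  (∃ g, HomGen f g D) ∧
    ∀ (m' : ℕ) (g' : Fin m' → (Fin 3 → S)) (D' : Fin m' → ℕ), HomGen f g' D' → m ≤ m'

/-- du Plessis–Wall bound `τ(d,r)_max` for `d/2 ≤ r ≤ d-1`. -/
def tauMax (d r : ℤ) : ℤ := (d-1)*(d-r-1) + r^2 - (2*r-d+2)*(2*r-d+1)/2

/-- `p` is a singular point of the curve `f = 0`. -/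
def IsSingAt (f : S) (p : Fin 3 → ℂ) : Prop := ∀ i, eval p (pderiv i f) = 0

/-- `p` is an ordinary node: a singular point where the Hessian matrix has rank 2,
i.e. the quadratic part of a local affine equation is nondegenerate. -/
def IsNodeAt (f : S) (p : Fin 3 → ℂ) : Prop :=
  IsSingAt f p ∧ (Matrix.of fun i j : Fin 3 => eval p (pderiv i (pderiv j f))).rank = 2

/-- The singular locus of `f = 0` as a set of points of `ℙ²`. -/
def SingLocus (f : S) : Set (Projectivization ℂ (Fin 3 → ℂ)) :=
  {P | IsSingAt f P.rep}

/-- The linear form with coefficient vector `v`. -/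
def linForm (v : Fin 3 → ℂ) : S := ∑ i, C (v i) * X i

/-- `T(k)`: the coefficient of `t^k` in `((1-t^(d-1))/(1-t))³`, i.e. the Hilbert
function of the Milnor algebra of a smooth curve of degree `d`. -/
noncomputable def Tcoef (d k : ℕ) : ℚ :=
  PowerSeries.coeff (R := ℚ) k ((((1 : PowerSeries ℚ) - PowerSeries.X ^ (d-1)) * ((1 : PowerSeries ℚ) - PowerSeries.X)⁻¹) ^ 3)


/-- `B(n) = n(n-1)/2`, the binomial coefficient "n choose 2" as a polynomial in `n ∈ ℤ`. -/
def binom2 (n : ℤ) : ℤ := n * (n - 1) / 2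

/-- The curve `f_d` with `d = 2r - 1`. -/
def oddCurve (r : ℕ) : S :=
  (X 1 ^ 3 - X 0 ^ 2 * X 2) * X 0 ^ (r - 3) * X 1 ^ (r - 1) + X 0 ^ (2 * r - 1) + X 1 ^ (2 * r - 1)

def rho1 (r : ℕ) : Fin 3 → S :=
  ![0, X 0 ^ (r - 1) * X 1,
    C ((r : ℂ) + 2) * X 0 ^ (r - 3) * X 1 ^ 3 + C (2 * (r : ℂ) - 1) * X 1 ^ r -
      C ((r : ℂ) - 1) * X 0 ^ (r - 1) * X 2]

theorem mem_AR_iff {f : S} {a : Fin 3 → S} :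
    a ∈ AR f ↔ a 0 * pderiv 0 f + a 1 * pderiv 1 f + a 2 * pderiv 2 f = 0 := by
  simp only [AR, jacMap, LinearMap.mem_ker, Fintype.linearCombination_apply, Fin.sum_univ_three,
    smul_eq_mul]

theorem mdr_le_of_mem_AR {f : S} {a : Fin 3 → S} {k : ℕ} (ha : a ∈ AR f) (ha₀ : a ≠ 0)
    (hk : ∀ i, (a i).IsHomogeneous k) : mdr f ≤ k :=
  Nat.sInf_le ⟨a, ha, ha₀, hk⟩

section

variable {r : ℕ}

theorem pderiv_one_oddCurve (hr : 3 ≤ r) : pderiv 1 (oddCurve r) = X 1 ^ (r - 2) * rho1 r 2 := by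
  obtain ⟨u, rfl⟩ : ∃ u, r = u + 3 := ⟨r - 3, by omega⟩
  simp only [oddCurve, rho1, Matrix.cons_val_two, Matrix.tail_cons, Matrix.head_cons,
    show u + 3 - 3 = u by omega, show u + 3 - 1 = u + 2 by omega,
    show u + 3 - 2 = u + 1 by omega, show 2 * (u + 3) - 1 = 2 * u + 5 by omega]
  simp only [map_add, map_sub, pderiv_mul, pderiv_pow, pderiv_X_self, pderiv_X_of_ne, ne_eq,
    Fin.reduceEq, not_false_eq_true]
  push_cast
  simp only [map_add, map_mul, map_natCast, map_ofNat, map_one]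
  ring

theorem pderiv_two_oddCurve (hr : 3 ≤ r) :
    pderiv 2 (oddCurve r) = -(X 0 ^ (r - 1) * X 1 ^ (r - 1)) := by
  obtain ⟨u, rfl⟩ : ∃ u, r = u + 3 := ⟨r - 3, by omega⟩
  simp [oddCurve, show u + 3 - 3 = u by omega, show u + 3 - 1 = u + 2 by omega]
  ring

theorem rho1_mem_AR (hr : 3 ≤ r) : rho1 r ∈ AR (oddCurve r) := by
  have hy : (X 1 : S) ^ (r - 1) = X 1 * X 1 ^ (r - 2) := by
    rw [← pow_succ']
    congr 1
    omega
  rw [mem_AR_iff, pderiv_one_oddCurve hr, pderiv_two_oddCurve hr,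
    show rho1 r 0 = 0 from rfl, show rho1 r 1 = X 0 ^ (r - 1) * X 1 from rfl, hy]
  ring

theorem rho1_ne_zero : rho1 r ≠ 0 := fun h => by
  simpa [rho1, X_ne_zero] using congrFun h 1

theorem rho1_isHomogeneous (hr : 3 ≤ r) (i : Fin 3) : (rho1 r i).IsHomogeneous r := by
  have hX (i : Fin 3) : (X i : S).IsHomogeneous 1 := isHomogeneous_X ℂ i
  have hC (a : ℂ) : (C a : S).IsHomogeneous 0 := isHomogeneous_C _ a
  have of_eq {p : S} {m : ℕ} (hp : p.IsHomogeneous m) (h : m = r) : p.IsHomogeneous r := h ▸ hp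
  fin_cases i <;> simp only [rho1, Fin.zero_eta, Fin.mk_one, Fin.reduceFinMk,
    Matrix.cons_val_zero, Matrix.cons_val_one, Matrix.cons_val_two, Matrix.head_cons,
    Matrix.tail_cons]
  · exact isHomogeneous_zero _ _ _
  · exact of_eq (((hX 0).pow (r - 1)).mul (hX 1)) (by omega)
  · refine ((IsHomogeneous.add ?_ ?_).sub ?_)
    · exact of_eq (((hC _).mul ((hX 0).pow (r - 3))).mul ((hX 1).pow 3)) (by omega)
    · exact of_eq ((hC _).mul ((hX 1).pow r)) (by omega)
    · exact of_eq (((hC _).mul ((hX 0).pow (r - 1))).mul (hX 2)) (by omega)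

end

/-- for odd `d = 2r-1 ≥ 5` and
`f_d = (y³-x²z)x^(r-3)y^(r-1)+x^d+y^d`, the triple
`ρ₁ = (0, x^(r-1)y, (r+2)x^(r-3)y³+(2r-1)y^r-(r-1)x^(r-1)z)` is a Jacobian syzygy of
`f_d`; in particular `mdr(f_d) ≤ r`. -/
theorem stmt10 (r d : ℕ) (hr : 3 ≤ r) (hd : d = 2 * r - 1) (f : S)
    (hf : f = (X 1 ^ 3 - X 0 ^ 2 * X 2) * X 0 ^ (r - 3) * X 1 ^ (r - 1) +
        X 0 ^ d + X 1 ^ d) :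
    0 * pderiv 0 f + (X 0 ^ (r - 1) * X 1) * pderiv 1 f +
        (C ((r : ℂ) + 2) * X 0 ^ (r - 3) * X 1 ^ 3 + C (2 * (r : ℂ) - 1) * X 1 ^ r -
          C ((r : ℂ) - 1) * X 0 ^ (r - 1) * X 2) * pderiv 2 f = 0 ∧
      mdr f ≤ r := by
  subst hd
  have hf : f = oddCurve r := hf
  subst hf
  have hρ := rho1_mem_AR hr
  refine ⟨?_, mdr_le_of_mem_AR hρ rho1_ne_zero (rho1_isHomogeneous hr)⟩
  simpa only [rho1, Matrix.cons_val_zero, Matrix.cons_val_one, Matrix.cons_val_two,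
    Matrix.head_cons, Matrix.tail_cons] using mem_AR_iff.mp hρ

end
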